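/- Given a graph G and an internal monotone connected node-clearing search S of G using K searchers, there exists an edge-clearing search S' of G using at most K+1 searchers. -/

import Mathlib

/-!
The edge search simulates the node search with one extra searcher. Before each move of `S`, the
extra searcher clears, one at a time, every edge whose two ends are guarded: it is placed at one
end, slides across the edge and is removed. The invariant is that every e-dirty edge is n-dirty or
has both ends guarded. After a clearing phase every e-dirty edge is n-dirty, and a move of `S`
that is not a removal turns an n-dirty edge into one that is n-dirty or guarded: the only way an
n-dirty end can become guarded while the other end becomes unguarded is a slide along that very
edge, which clears it. As `S` ends with no n-dirty node, a last clearing phase leaves no e-dirty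
edge.
-/

open SimpleGraph

/-- A move in a graph-search game: place a searcher, remove a searcher,
or slide a searcher along an edge. -/
inductive GMove (V : Type*) where
  | place (v : V)
  | remove (v : V)
  | slide (u v : V)

namespace GMove

/-- The node (if any) entered by the move. -/
def target {V : Type*} : GMove V → Option V
  | place v => some v
  | remove _ => none
  | slide _ v => some v

/-- The edge (if any) traversed by the move. -/
def traversed {V : Type*} : GMove V → Option (Sym2 V)
  | slide u v => some s(u, v)
  | _ => none

end GMove

variable {V : Type*}

open Classical in
/-- Number of searchers located at each node after `t` moves
(the move between time `t` and `t+1` is `S t`). -/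
noncomputable def occ (S : ℕ → GMove V) : ℕ → V → ℕ
  | 0 => fun _ => 0
  | t + 1 => fun x =>
    match S t with
    | .place v => if x = v then occ S t x + 1 else occ S t x
    | .remove v => if x = v then occ S t x - 1 else occ S t x
    | .slide u v =>
        if x = v then occ S t x + 1 else if x = u then occ S t x - 1 else occ S t x

/-- Number of searchers inside the graph after `t` moves. -/
def sn (S : ℕ → GMove V) : ℕ → ℕ
  | 0 => 0
  | t + 1 =>
    match S t with
    | .place _ => sn S t + 1
    | .remove _ => sn S t - 1
    | .slide _ _ => sn S t

/-- A legal search schedule on `G`: slides go along edges starting from an occupied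
node, and removals take place at occupied nodes. -/
def Legal (G : SimpleGraph V) (S : ℕ → GMove V) : Prop :=
  ∀ t, match S t with
    | .place _ => True
    | .remove v => 0 < occ S t v
    | .slide u v => G.Adj u v ∧ 0 < occ S t u

/-- An internal schedule never removes searchers from the graph. -/
def Internal (S : ℕ → GMove V) : Prop := ∀ t v, S t ≠ GMove.remove v

/-- A rooted schedule places searchers only at the root `r`. -/
def RootedAt (S : ℕ → GMove V) (r : V) : Prop := ∀ t v, S t = GMove.place v → v = r

/-- The set of n-dirty nodes of the node game: initially all nodes are n-dirty;
after a move, a node is n-dirty iff it is joined to a previously n-dirty node by a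
path all of whose nodes are unguarded. -/
def ndirty (G : SimpleGraph V) (S : ℕ → GMove V) : ℕ → Set V
  | 0 => Set.univ
  | t + 1 =>
    { u | ∃ w, w ∈ ndirty G S t ∧ ∃ p : G.Walk u w, ∀ x ∈ p.support, occ S (t + 1) x = 0 }

/-- The set of n-dirty edges: edges incident to an n-dirty node. -/
def nEdgeDirty (G : SimpleGraph V) (S : ℕ → GMove V) (t : ℕ) : Set (Sym2 V) :=
  { e | e ∈ G.edgeSet ∧ ∃ v ∈ e, v ∈ ndirty G S t }

/-- The set of e-dirty edges of the edge game: initially all edges are e-dirty;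
a traversed edge is cleared, and an edge is recontaminated when joined to a
(still) e-dirty edge by a path whose interior nodes are unguarded. -/
def edirty (G : SimpleGraph V) (S : ℕ → GMove V) : ℕ → Set (Sym2 V)
  | 0 => G.edgeSet
  | t + 1 =>
    (edirty G S t \ { e | (S t).traversed = some e }) ∪
      { e | ∃ x y q q', e = s(x, y) ∧ G.Adj x y ∧ G.Adj q q' ∧
          (s(q, q') ∈ edirty G S t ∧ (S t).traversed ≠ some s(q, q')) ∧
          ∃ p : G.Walk y q, ∀ z ∈ p.support, occ S (t + 1) z = 0 }

/-- A node is e-dirty iff it is unguarded and adjacent to an e-dirty edge. -/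
def edirtyNode (G : SimpleGraph V) (S : ℕ → GMove V) (t : ℕ) : Set V :=
  { v | occ S t v = 0 ∧ ∃ e ∈ edirty G S t, v ∈ e }

/-- The set of m-dirty edges of the mixed edge game: as in the edge game, but in
addition an edge both of whose endpoints are guarded becomes m-clear. -/
def mdirty (G : SimpleGraph V) (S : ℕ → GMove V) : ℕ → Set (Sym2 V)
  | 0 => G.edgeSet
  | t + 1 =>
    (mdirty G S t \
        ({ e | (S t).traversed = some e } ∪ { e | ∀ v ∈ e, 0 < occ S (t + 1) v })) ∪
      { e | ∃ x y q q', e = s(x, y) ∧ G.Adj x y ∧ G.Adj q q' ∧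
          (s(q, q') ∈ mdirty G S t ∧ (S t).traversed ≠ some s(q, q') ∧
            ¬ (∀ v ∈ (s(q, q') : Sym2 V), 0 < occ S (t + 1) v)) ∧
          ∃ p : G.Walk y q, ∀ z ∈ p.support, occ S (t + 1) z = 0 }

/-- A node is m-dirty iff it is unguarded and adjacent to an m-dirty edge. -/
def mdirtyNode (G : SimpleGraph V) (S : ℕ → GMove V) (t : ℕ) : Set V :=
  { v | occ S t v = 0 ∧ ∃ e ∈ mdirty G S t, v ∈ e }

/-- The n-clear subgraph: n-clear nodes and all edges of `G` between them. -/
def nclearSubgraph (G : SimpleGraph V) (S : ℕ → GMove V) (t : ℕ) : G.Subgraph where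
  verts := (ndirty G S t)ᶜ
  Adj a b := G.Adj a b ∧ a ∉ ndirty G S t ∧ b ∉ ndirty G S t
  adj_sub h := h.1
  edge_vert h := h.2.1
  symm := ⟨fun a b h => ⟨h.1.symm, h.2.2, h.2.1⟩⟩

/-- The e-clear subgraph: e-clear nodes and e-clear edges. -/
def eclearSubgraph (G : SimpleGraph V) (S : ℕ → GMove V) (t : ℕ) : G.Subgraph where
  verts := { v | v ∉ edirtyNode G S t } ∪ { v | ∃ e ∈ G.edgeSet \ edirty G S t, v ∈ e }
  Adj a b := G.Adj a b ∧ s(a, b) ∈ G.edgeSet \ edirty G S t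
  adj_sub h := h.1
  edge_vert {a b} h := Or.inr ⟨s(a, b), h.2, Sym2.mem_mk_left a b⟩
  symm := ⟨fun a b h => ⟨h.1.symm, by rw [Sym2.eq_swap]; exact h.2⟩⟩

section Basic
variable {G : SimpleGraph V} {S : ℕ → GMove V} {t : ℕ}

open Classical in
lemma occ_succ_place {v : V} (h : S t = .place v) (x : V) :
    occ S (t + 1) x = if x = v then occ S t x + 1 else occ S t x := by
  simp [occ, h]

open Classical in
lemma occ_succ_remove {v : V} (h : S t = .remove v) (x : V) :
    occ S (t + 1) x = if x = v then occ S t x - 1 else occ S t x := by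
  simp [occ, h]

open Classical in
lemma occ_succ_slide {u v : V} (h : S t = .slide u v) (x : V) :
    occ S (t + 1) x =
      if x = v then occ S t x + 1 else if x = u then occ S t x - 1 else occ S t x := by
  simp [occ, h]

lemma sn_succ_place {v : V} (h : S t = .place v) : sn S (t + 1) = sn S t + 1 := by
  simp [sn, h]

lemma sn_succ_remove {v : V} (h : S t = .remove v) : sn S (t + 1) = sn S t - 1 := by
  simp [sn, h]

lemma sn_succ_slide {u v : V} (h : S t = .slide u v) : sn S (t + 1) = sn S t := by
  simp [sn, h]

lemma occ_succ_ne_zero {x : V} (h : occ S (t + 1) x ≠ 0) :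
    occ S t x ≠ 0 ∨ (S t).target = some x := by
  rcases hm : S t with v | v | ⟨u, v⟩
  · rw [occ_succ_place hm] at h
    split_ifs at h with hxv
    · simp [GMove.target, hxv]
    · exact Or.inl h
  · rw [occ_succ_remove hm] at h
    split_ifs at h <;> omega
  · rw [occ_succ_slide hm] at h
    split_ifs at h with hxv hxu
    · simp [GMove.target, hxv]
    · omega
    · exact Or.inl h

lemma finite_occ_ne_zero (S : ℕ → GMove V) (t : ℕ) : {x | occ S t x ≠ 0}.Finite := by
  induction t with
  | zero => simp [occ]
  | succ t ih =>
    refine (ih.union (Set.Subsingleton.finite ?_)).subset fun x hx => occ_succ_ne_zero hx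
    intro x hx y hy
    exact Option.some_injective _ (hx.symm.trans hy)

lemma eq_slide_of_vacate_of_fill (hnr : ∀ v, S t ≠ .remove v) {a b : V}
    (hb : occ S t b ≠ 0) (hb' : occ S (t + 1) b = 0)
    (ha : occ S t a = 0) (ha' : occ S (t + 1) a ≠ 0) : S t = .slide b a := by
  rcases hm : S t with v | v | ⟨u, v⟩
  · rw [occ_succ_place hm] at hb'
    split_ifs at hb'
    exact absurd hb' hb
  · exact absurd hm (hnr v)
  · rw [occ_succ_slide hm] at hb' ha'
    split_ifs at hb' ha' <;> simp_all

lemma edirty_subset_edgeSet : ∀ t, edirty G S t ⊆ G.edgeSet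
  | 0 => le_rfl
  | t + 1 => by
    rintro e (⟨he, -⟩ | ⟨x, y, q, q', rfl, hxy, -⟩)
    exacts [edirty_subset_edgeSet t he, hxy]

lemma exists_eq_place_zero (hL : Legal G S) (hI : Internal S) : ∃ v, S 0 = .place v := by
  have h0 := hL 0
  rcases hm : S 0 with v | v | ⟨u, v⟩
  · exact ⟨v, rfl⟩
  · exact absurd hm (hI 0 v)
  · rw [hm] at h0
    exact absurd h0.2 (by simp [occ])

end Basic

def guardedEdges (S : ℕ → GMove V) (t : ℕ) : Set (Sym2 V) := {e | ∀ v ∈ e, 0 < occ S t v}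

section NodeGame
variable {G : SimpleGraph V} {S : ℕ → GMove V} {t : ℕ}

lemma occ_eq_zero_of_mem_ndirty {a : V} (h : a ∈ ndirty G S t) : occ S t a = 0 := by
  cases t with
  | zero => rfl
  | succ t =>
    obtain ⟨w, -, p, hp⟩ := h
    exact hp a p.start_mem_support

lemma mem_ndirty_succ_of_mem {a : V} (h : a ∈ ndirty G S t) (h0 : occ S (t + 1) a = 0) :
    a ∈ ndirty G S (t + 1) :=
  ⟨a, h, .nil, by simpa using h0⟩

lemma mem_ndirty_of_walk {y c : V} (p : G.Walk y c) (hc : c ∈ ndirty G S t)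
    (hp : ∀ z ∈ p.support, occ S t z = 0) : y ∈ ndirty G S t := by
  cases t with
  | zero => trivial
  | succ t =>
    obtain ⟨w, hw, q, hq⟩ := hc
    refine ⟨w, hw, p.append q, fun z hz => ?_⟩
    rcases (SimpleGraph.Walk.mem_support_append_iff p q).1 hz with hz | hz
    exacts [hp z hz, hq z hz]

lemma mem_ndirty_of_walk_to_nEdgeDirty {y q q' : V} (hq : s(q, q') ∈ nEdgeDirty G S t)
    (p : G.Walk y q) (hp : ∀ z ∈ p.support, occ S t z = 0) : y ∈ ndirty G S t := by
  obtain ⟨hqq', c, hc, hcd⟩ := hq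
  rcases Sym2.mem_iff.1 hc with rfl | rfl
  · exact mem_ndirty_of_walk p hcd hp
  · refine mem_ndirty_of_walk (p.concat (G.mem_edgeSet.1 hqq')) hcd fun z hz => ?_
    rw [SimpleGraph.Walk.support_concat, List.mem_append, List.mem_singleton] at hz
    rcases hz with hz | rfl
    exacts [hp z hz, occ_eq_zero_of_mem_ndirty hcd]

lemma mem_nEdgeDirty_of_recontaminated {x y q q' : V} (hxy : G.Adj x y)
    (hq : s(q, q') ∈ nEdgeDirty G S t ∪ guardedEdges S t)
    (p : G.Walk y q) (hp : ∀ z ∈ p.support, occ S t z = 0) : s(x, y) ∈ nEdgeDirty G S t := by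
  have hqN : s(q, q') ∈ nEdgeDirty G S t := hq.resolve_right fun hg =>
    (hg q (Sym2.mem_mk_left q q')).ne' (hp q p.end_mem_support)
  exact ⟨hxy, y, Sym2.mem_mk_right x y, mem_ndirty_of_walk_to_nEdgeDirty hqN p hp⟩

lemma mem_nEdgeDirty_succ_or_guarded (hnr : ∀ v, S t ≠ .remove v) {e : Sym2 V}
    (he : e ∈ nEdgeDirty G S t) (het : (S t).traversed ≠ some e) :
    e ∈ nEdgeDirty G S (t + 1) ∪ guardedEdges S (t + 1) := by
  obtain ⟨heE, a, hae, had⟩ := he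
  obtain ⟨b, rfl⟩ : ∃ b, s(a, b) = e := ⟨_, Sym2.other_spec hae⟩
  by_cases ha : occ S (t + 1) a = 0
  · exact Or.inl ⟨heE, a, hae, mem_ndirty_succ_of_mem had ha⟩
  by_cases hb : occ S (t + 1) b = 0
  swap
  · refine Or.inr fun v hv => ?_
    rcases Sym2.mem_iff.1 hv with rfl | rfl <;> omega
  by_cases hbd : b ∈ ndirty G S t
  · exact Or.inl ⟨heE, b, Sym2.mem_mk_right a b, mem_ndirty_succ_of_mem hbd hb⟩
  have ha0 := occ_eq_zero_of_mem_ndirty had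
  -- `b` was guarded at time `t` (else it would be n-dirty, next to `a`), so the move emptied `b`
  -- and filled `a`: it slid along the edge itself.
  have hb0 : occ S t b ≠ 0 := fun h =>
    hbd (mem_ndirty_of_walk (SimpleGraph.Adj.toWalk (G.mem_edgeSet.1 heE).symm) had
      (by simp [h, ha0]))
  refine absurd ?_ het
  rw [eq_slide_of_vacate_of_fill hnr hb0 hb ha0 ha, GMove.traversed, Sym2.eq_swap]

end NodeGame

section EdgeGame
variable {G : SimpleGraph V} {S S' : ℕ → GMove V} {t τ : ℕ}

lemma edirty_succ_subset_of_le_occ (hocc : ∀ x, occ S t x ≤ occ S' (τ + 1) x)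
    (hsub : edirty G S' τ ⊆ nEdgeDirty G S t ∪ guardedEdges S t) :
    edirty G S' (τ + 1) ⊆
      (edirty G S' τ \ {e | (S' τ).traversed = some e}) ∪ nEdgeDirty G S t := by
  rintro e (he | ⟨x, y, q, q', rfl, hxy, -, ⟨hq, -⟩, p, hp⟩)
  · exact Or.inl he
  · exact Or.inr (mem_nEdgeDirty_of_recontaminated hxy (hsub hq) p fun z hz =>
      Nat.eq_zero_of_le_zero ((hocc z).trans (hp z hz).le))

lemma edirty_succ_subset_of_step (hmv : S' τ = S t) (hnr : ∀ v, S t ≠ .remove v)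
    (hocc : occ S' (τ + 1) = occ S (t + 1)) (hsub : edirty G S' τ ⊆ nEdgeDirty G S t) :
    edirty G S' (τ + 1) ⊆ nEdgeDirty G S (t + 1) ∪ guardedEdges S (t + 1) := by
  have hsurv : ∀ e ∈ edirty G S' τ, (S' τ).traversed ≠ some e →
      e ∈ nEdgeDirty G S (t + 1) ∪ guardedEdges S (t + 1) :=
    fun e he het => mem_nEdgeDirty_succ_or_guarded hnr (hsub he) (hmv ▸ het)
  rintro e (⟨he, het⟩ | ⟨x, y, q, q', rfl, hxy, -, ⟨hq, hqt⟩, p, hp⟩)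
  · exact hsurv e he het
  · exact Or.inl (mem_nEdgeDirty_of_recontaminated hxy (hsurv _ hq hqt) p
      fun z hz => hocc ▸ hp z hz)

lemma occ_succ_eq_of_step (hmv : S' τ = S t) (hocc : occ S' τ = occ S t) :
    occ S' (τ + 1) = occ S (t + 1) := by
  funext x
  simp only [occ, hmv, hocc]

lemma sn_succ_eq_of_step (hmv : S' τ = S t) (hsn : sn S' τ = sn S t) :
    sn S' (τ + 1) = sn S (t + 1) := by
  simp only [sn, hmv, hsn]

end EdgeGame

def RunsFrom (S' : ℕ → GMove V) : ℕ → List (GMove V) → Prop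
  | _, [] => True
  | a, m :: l => S' a = m ∧ RunsFrom S' (a + 1) l

def LegalAt (G : SimpleGraph V) (S' : ℕ → GMove V) (τ : ℕ) : Prop :=
  match S' τ with
  | .place _ => True
  | .remove v => 0 < occ S' τ v
  | .slide u v => G.Adj u v ∧ 0 < occ S' τ u

def LegalOn (G : SimpleGraph V) (S' : ℕ → GMove V) (B a b : ℕ) : Prop :=
  ∀ i ∈ Set.Ico a b, LegalAt G S' i ∧ sn S' i ≤ B

def clearingMoves (p : V × V) : List (GMove V) := [.place p.1, .slide p.1 p.2, .remove p.2]

section Schedules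
variable {G : SimpleGraph V} {S' : ℕ → GMove V} {a b c B : ℕ}

lemma runsFrom_append {l₁ l₂ : List (GMove V)} :
    RunsFrom S' a (l₁ ++ l₂) ↔ RunsFrom S' a l₁ ∧ RunsFrom S' (a + l₁.length) l₂ := by
  induction l₁ generalizing a with
  | nil => simp [RunsFrom]
  | cons m l ih => simp [RunsFrom, ih, and_assoc, Nat.add_right_comm _ 1, Nat.add_assoc]

lemma runsFrom_getD (d : GMove V) (pre l : List (GMove V)) :
    RunsFrom (fun n => (pre ++ l).getD n d) pre.length l := by
  induction l generalizing pre with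
  | nil => trivial
  | cons m l ih =>
    refine ⟨by simp, ?_⟩
    simpa using ih (pre ++ [m])

lemma LegalOn.trans (h₁ : LegalOn G S' B a b) (h₂ : LegalOn G S' B b c) :
    LegalOn G S' B a c := fun i hi =>
  if hib : i < b then h₁ i ⟨hi.1, hib⟩ else h₂ i ⟨not_lt.1 hib, hi.2⟩

lemma LegalOn.mono {B' : ℕ} (h : LegalOn G S' B a b) (hB : B ≤ B') : LegalOn G S' B' a b :=
  fun i hi => ⟨(h i hi).1, (h i hi).2.trans hB⟩

lemma legalOn_self_succ_iff : LegalOn G S' B a (a + 1) ↔ LegalAt G S' a ∧ sn S' a ≤ B := by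
  refine ⟨fun h => h a ⟨le_rfl, a.lt_add_one⟩, fun h i hi => ?_⟩
  obtain rfl : i = a := le_antisymm (Nat.lt_succ_iff.1 hi.2) hi.1
  exact h

end Schedules

section Clearing
variable {G : SimpleGraph V} {S S' : ℕ → GMove V} {t a : ℕ} {w z : V}

open Classical in
lemma occ_of_runsFrom_clearingMoves (h : RunsFrom S' a (clearingMoves (w, z))) (hwz : w ≠ z) :
    (∀ x, occ S' (a + 1) x = if x = w then occ S' a x + 1 else occ S' a x) ∧
    (∀ x, occ S' (a + 2) x = if x = z then occ S' a x + 1 else occ S' a x) ∧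
    occ S' (a + 3) = occ S' a := by
  obtain ⟨h₀, h₁, h₂, -⟩ := h
  dsimp only at h₀ h₁ h₂
  have o₁ := occ_succ_place h₀
  have o₂ : ∀ x, occ S' (a + 2) x = if x = z then occ S' a x + 1 else occ S' a x := by
    intro x
    rw [occ_succ_slide h₁, o₁]
    split_ifs <;> simp_all
  refine ⟨o₁, o₂, funext fun x => ?_⟩
  rw [occ_succ_remove h₂, o₂]
  split_ifs <;> omega

lemma sn_of_runsFrom_clearingMoves (h : RunsFrom S' a (clearingMoves (w, z))) :
    sn S' (a + 1) = sn S' a + 1 ∧ sn S' (a + 2) = sn S' a + 1 ∧ sn S' (a + 3) = sn S' a := by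
  obtain ⟨h₀, h₁, h₂, -⟩ := h
  have s₁ := sn_succ_place h₀
  have s₂ : sn S' (a + 2) = sn S' a + 1 := (sn_succ_slide h₁).trans s₁
  exact ⟨s₁, s₂, (sn_succ_remove h₂).trans (by rw [s₂]; rfl)⟩

lemma legalOn_clearingMoves (h : RunsFrom S' a (clearingMoves (w, z))) (hwz : G.Adj w z) :
    LegalOn G S' (sn S' a + 1) a (a + 3) := by
  obtain ⟨o₁, o₂, -⟩ := occ_of_runsFrom_clearingMoves h hwz.ne
  obtain ⟨s₁, s₂, -⟩ := sn_of_runsFrom_clearingMoves h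
  obtain ⟨h₀, h₁, h₂, -⟩ := h
  rintro i ⟨hai, hia⟩
  obtain ⟨k, hk, rfl⟩ : ∃ k < 3, i = a + k := ⟨i - a, by omega, by omega⟩
  interval_cases k
  · simp [LegalAt, h₀]
  · simp [LegalAt, h₁, hwz, o₁, s₁]
  · simp [LegalAt, h₂, o₂, s₂]

lemma edirty_clearingMoves_subset (h : RunsFrom S' a (clearingMoves (w, z))) (hwz : w ≠ z)
    (hocc : ∀ x, occ S t x ≤ occ S' a x)
    (hsub : edirty G S' a ⊆ nEdgeDirty G S t ∪ guardedEdges S t) :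
    edirty G S' (a + 3) ⊆ (edirty G S' a \ {s(w, z)}) ∪ nEdgeDirty G S t := by
  obtain ⟨o₁, o₂, o₃⟩ := occ_of_runsFrom_clearingMoves h hwz
  have h₁ : S' (a + 1) = .slide w z := h.2.1
  have le₁ : ∀ x, occ S t x ≤ occ S' (a + 1) x := fun x =>
    (hocc x).trans (by rw [o₁]; split_ifs <;> omega)
  have le₂ : ∀ x, occ S t x ≤ occ S' (a + 2) x := fun x =>
    (hocc x).trans (by rw [o₂]; split_ifs <;> omega)
  have le₃ : ∀ x, occ S t x ≤ occ S' (a + 3) x := o₃ ▸ hocc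
  have e₁ := edirty_succ_subset_of_le_occ le₁ hsub
  have sub₁ := e₁.trans (Set.union_subset (Set.sdiff_subset.trans hsub) Set.subset_union_left)
  have e₂ := edirty_succ_subset_of_le_occ le₂ sub₁
  have sub₂ := e₂.trans (Set.union_subset (Set.sdiff_subset.trans sub₁) Set.subset_union_left)
  have e₃ := edirty_succ_subset_of_le_occ le₃ sub₂
  intro e he
  rcases e₃ he with ⟨he₂, -⟩ | hN
  · rcases e₂ he₂ with ⟨he₁, hne⟩ | hN
    · rcases e₁ he₁ with ⟨he₀, -⟩ | hN
      · rw [h₁] at hne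
        exact Or.inl ⟨he₀, fun hew => hne (by rw [hew]; rfl)⟩
      · exact Or.inr hN
    · exact Or.inr hN
  · exact Or.inr hN

lemma runsFrom_flatMap_clearingMoves (ps : List (V × V)) (hps : ∀ p ∈ ps, G.Adj p.1 p.2)
    (h : RunsFrom S' a (ps.flatMap clearingMoves)) (hocc : ∀ x, occ S t x ≤ occ S' a x)
    (hsub : edirty G S' a ⊆ nEdgeDirty G S t ∪ guardedEdges S t) :
    occ S' (a + 3 * ps.length) = occ S' a ∧ sn S' (a + 3 * ps.length) = sn S' a ∧
      LegalOn G S' (sn S' a + 1) a (a + 3 * ps.length) ∧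
      edirty G S' (a + 3 * ps.length) ⊆
        (edirty G S' a \ {e | ∃ p ∈ ps, e = s(p.1, p.2)}) ∪ nEdgeDirty G S t := by
  induction ps generalizing a with
  | nil =>
    refine ⟨rfl, rfl, fun i hi => absurd hi (by simp), fun e he => Or.inl ⟨he, ?_⟩⟩
    simp
  | cons p ps ih =>
    obtain ⟨w, z⟩ := p
    obtain ⟨h₁, h₂⟩ : RunsFrom S' a (clearingMoves (w, z)) ∧
        RunsFrom S' (a + 3) (ps.flatMap clearingMoves) := runsFrom_append.1 h
    have hwz : G.Adj w z := hps (w, z) List.mem_cons_self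
    obtain ⟨-, -, o₃⟩ := occ_of_runsFrom_clearingMoves h₁ hwz.ne
    obtain ⟨-, -, s₃⟩ := sn_of_runsFrom_clearingMoves h₁
    have e₃ := edirty_clearingMoves_subset h₁ hwz.ne hocc hsub
    obtain ⟨o, s, l, e⟩ := ih (fun p hp => hps p (List.mem_cons_of_mem _ hp)) h₂ (o₃ ▸ hocc)
      (e₃.trans (Set.union_subset (Set.sdiff_subset.trans hsub) Set.subset_union_left))
    have hlen : a + 3 * ((w, z) :: ps).length = a + 3 + 3 * ps.length := by
      simp only [List.length_cons]; ring
    rw [hlen, o, o₃, s, s₃]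
    refine ⟨rfl, rfl, (legalOn_clearingMoves h₁ hwz).trans (s₃ ▸ l), fun e' he' => ?_⟩
    rcases e he' with ⟨he'₃, hnot⟩ | hN
    · rcases e₃ he'₃ with ⟨he'₀, hne⟩ | hN
      · refine Or.inl ⟨he'₀, ?_⟩
        rintro ⟨q, hq, rfl⟩
        rcases List.mem_cons.1 hq with rfl | hq
        · exact hne rfl
        · exact hnot ⟨q, hq, rfl⟩
      · exact Or.inr hN
    · exact Or.inr hN

end Clearing

lemma finite_adj_guardedEdges (G : SimpleGraph V) (S : ℕ → GMove V) (t : ℕ) :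
    {p : V × V | G.Adj p.1 p.2 ∧ s(p.1, p.2) ∈ guardedEdges S t}.Finite :=
  ((finite_occ_ne_zero S t).prod (finite_occ_ne_zero S t)).subset fun _ hp =>
    ⟨(hp.2 _ (Sym2.mem_mk_left _ _)).ne', (hp.2 _ (Sym2.mem_mk_right _ _)).ne'⟩

noncomputable def guardedPairs (G : SimpleGraph V) (S : ℕ → GMove V) (t : ℕ) : List (V × V) :=
  (finite_adj_guardedEdges G S t).toFinset.toList

noncomputable def clearingPhase (G : SimpleGraph V) (S : ℕ → GMove V) (t : ℕ) :
    List (GMove V) :=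
  (guardedPairs G S t).flatMap clearingMoves

def Tracks (G : SimpleGraph V) (S S' : ℕ → GMove V) (t a : ℕ) : Prop :=
  occ S' a = occ S t ∧ sn S' a = sn S t ∧
    edirty G S' a ⊆ nEdgeDirty G S t ∪ guardedEdges S t

section Simulation
variable {G : SimpleGraph V} {S S' : ℕ → GMove V} {t a τ : ℕ}

lemma mem_guardedPairs {p : V × V} :
    p ∈ guardedPairs G S t ↔ G.Adj p.1 p.2 ∧ s(p.1, p.2) ∈ guardedEdges S t := by
  simp [guardedPairs]

lemma length_clearingPhase :
    (clearingPhase G S t).length = 3 * (guardedPairs G S t).length := by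
  simp [clearingPhase, List.length_flatMap, clearingMoves, List.sum_replicate, mul_comm]

lemma tracks_zero : Tracks G S S' 0 0 :=
  ⟨rfl, rfl, fun e he => Or.inl ⟨he, _, Sym2.out_fst_mem e, trivial⟩⟩

lemma Tracks.runsFrom_clearingPhase (hT : Tracks G S S' t a)
    (h : RunsFrom S' a (clearingPhase G S t)) :
    occ S' (a + (clearingPhase G S t).length) = occ S t ∧
      sn S' (a + (clearingPhase G S t).length) = sn S t ∧
      LegalOn G S' (sn S t + 1) a (a + (clearingPhase G S t).length) ∧
      edirty G S' (a + (clearingPhase G S t).length) ⊆ nEdgeDirty G S t := by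
  obtain ⟨hocc, hsn, hsub⟩ := hT
  obtain ⟨o, s, l, e⟩ := runsFrom_flatMap_clearingMoves (guardedPairs G S t)
    (fun p hp => (mem_guardedPairs.1 hp).1) h (fun x => (congrFun hocc x).ge) hsub
  rw [length_clearingPhase, o, s, hocc, hsn]
  refine ⟨rfl, rfl, hsn ▸ l, fun e' he' => ?_⟩
  rcases e he' with ⟨he'₀, hnot⟩ | hN
  · refine (hsub he'₀).resolve_right fun hg => hnot ?_
    induction e' using Sym2.ind with
    | _ x y =>
      exact ⟨(x, y), mem_guardedPairs.2 ⟨edirty_subset_edgeSet a he'₀, hg⟩, rfl⟩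
  · exact hN

lemma legalAt_of_step (hmv : S' τ = S t) (hocc : occ S' τ = occ S t) (h : LegalAt G S t) :
    LegalAt G S' τ := by
  unfold LegalAt
  rwa [hmv, hocc]

noncomputable def block (G : SimpleGraph V) (S : ℕ → GMove V) (t : ℕ) : List (GMove V) :=
  clearingPhase G S t ++ [S t]

lemma Tracks.succ_of_runsFrom_block (hT : Tracks G S S' t a) (h : RunsFrom S' a (block G S t))
    (hL : LegalAt G S t) (hnr : ∀ v, S t ≠ .remove v) :
    Tracks G S S' (t + 1) (a + (block G S t).length) ∧
      LegalOn G S' (sn S t + 1) a (a + (block G S t).length) := by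
  obtain ⟨hph, hmv, -⟩ := runsFrom_append.1 h
  obtain ⟨hocc, hsn, hLO, hsub⟩ := hT.runsFrom_clearingPhase hph
  set τ := a + (clearingPhase G S t).length
  have hocc' := occ_succ_eq_of_step hmv hocc
  have hlen : a + (block G S t).length = τ + 1 := by
    simp [block, τ, Nat.add_assoc]
  rw [hlen]
  refine ⟨⟨hocc', sn_succ_eq_of_step hmv hsn, edirty_succ_subset_of_step hmv hnr hocc' hsub⟩,
    hLO.trans (legalOn_self_succ_iff.2 ⟨legalAt_of_step hmv hocc hL, by omega⟩)⟩

end Simulation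

noncomputable def edgeSearchMoves (G : SimpleGraph V) (S : ℕ → GMove V) (Tf : ℕ) :
    List (GMove V) :=
  (List.range Tf).flatMap (block G S) ++ clearingPhase G S Tf

/-- Padded with `S 0`, a placement by `exists_eq_place_zero`, so that it stays legal after its
last move. -/
noncomputable def edgeSearch (G : SimpleGraph V) (S : ℕ → GMove V) (Tf : ℕ) : ℕ → GMove V :=
  fun n => (edgeSearchMoves G S Tf).getD n (S 0)

noncomputable def blockStart (G : SimpleGraph V) (S : ℕ → GMove V) (t : ℕ) : ℕ :=
  ((List.range t).flatMap (block G S)).length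

section EdgeSearch
variable {G : SimpleGraph V} {S : ℕ → GMove V} {Tf K : ℕ}

lemma blockStart_succ (t : ℕ) :
    blockStart G S (t + 1) = blockStart G S t + (block G S t).length := by
  simp [blockStart, List.range_succ]

lemma length_edgeSearchMoves :
    (edgeSearchMoves G S Tf).length = blockStart G S Tf + (clearingPhase G S Tf).length := by
  simp [edgeSearchMoves, blockStart]

lemma runsFrom_block {t : ℕ} (ht : t < Tf) :
    RunsFrom (edgeSearch G S Tf) (blockStart G S t) (block G S t) := by
  have hpre : List.range (t + 1) <+: List.range Tf := by
    obtain ⟨k, rfl⟩ := Nat.exists_eq_add_of_le ht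
    exact ⟨_, List.range_add.symm⟩
  obtain ⟨post, hpost⟩ := hpre.flatMap (block G S)
  have hsplit : edgeSearchMoves G S Tf =
      (List.range t).flatMap (block G S) ++ (block G S t ++ (post ++ clearingPhase G S Tf)) := by
    rw [edgeSearchMoves, ← hpost, List.range_succ, List.flatMap_append]
    simp
  have h := runsFrom_getD (S 0) ((List.range t).flatMap (block G S))
    (block G S t ++ (post ++ clearingPhase G S Tf))
  rw [← hsplit] at h
  exact (runsFrom_append.1 h).1

lemma runsFrom_final :
    RunsFrom (edgeSearch G S Tf) (blockStart G S Tf) (clearingPhase G S Tf) :=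
  runsFrom_getD (S 0) _ _

lemma tracks_blockStart (hL : Legal G S) (hI : Internal S) (hK : ∀ t ≤ Tf, sn S t ≤ K) :
    ∀ t ≤ Tf, Tracks G S (edgeSearch G S Tf) t (blockStart G S t) ∧
      LegalOn G (edgeSearch G S Tf) (K + 1) 0 (blockStart G S t)
  | 0, _ => ⟨tracks_zero, fun i hi => absurd hi.2 (by simp [blockStart])⟩
  | t + 1, ht => by
    obtain ⟨hT, hLO⟩ := tracks_blockStart hL hI hK t (by omega)
    obtain ⟨hT', hLO'⟩ := hT.succ_of_runsFrom_block (runsFrom_block ht) (hL t) (hI t)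
    rw [blockStart_succ]
    exact ⟨hT', hLO.trans (hLO'.mono (by have := hK t (by omega); omega))⟩

end EdgeSearch

theorem stmt10_general {V : Type*} (G : SimpleGraph V) (S : ℕ → GMove V) (hL : Legal G S)
    (hI : Internal S)
    (Tf : ℕ)
    (hclear : ndirty G S Tf = ∅)
    (K : ℕ) (hK : ∀ t ≤ Tf, sn S t ≤ K) :
    ∃ (S' : ℕ → GMove V) (Tf' : ℕ), Legal G S' ∧ edirty G S' Tf' = ∅ ∧
      ∀ t ≤ Tf', sn S' t ≤ K + 1 := by
  obtain ⟨hT, hLO⟩ := tracks_blockStart hL hI hK Tf le_rfl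
  obtain ⟨-, hsn, hLO', hsub⟩ := hT.runsFrom_clearingPhase runsFrom_final
  have hKTf := hK Tf le_rfl
  have hall := hLO.trans (hLO'.mono (by omega))
  rw [← length_edgeSearchMoves] at hall hsn hsub
  refine ⟨edgeSearch G S Tf, (edgeSearchMoves G S Tf).length, fun τ => ?_, ?_, fun τ hτ => ?_⟩
  · by_cases hτ : τ < (edgeSearchMoves G S Tf).length
    · exact (hall τ ⟨τ.zero_le, hτ⟩).1
    · obtain ⟨v, hv⟩ := exists_eq_place_zero hL hI
      have hpad : edgeSearch G S Tf τ = .place v :=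
        (List.getD_eq_default _ _ (not_lt.1 hτ)).trans hv
      show LegalAt G _ τ
      simp [LegalAt, hpad]
  · refine Set.subset_eq_empty hsub ?_
    simp [nEdgeDirty, hclear]
  · rcases hτ.lt_or_eq with hτ | rfl
    exacts [(hall τ ⟨τ.zero_le, hτ⟩).2, by omega]

/-- Given an internal monotone connected node-clearing search of `G` using at most
`K` searchers, there is an edge-clearing search of `G` using at most `K + 1`
searchers. -/
theorem stmt10 {V : Type*} (G : SimpleGraph V) (S : ℕ → GMove V) (hL : Legal G S)
    (hI : Internal S)
    (Tf : ℕ)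
    (hM : ∀ t < Tf, ndirty G S (t + 1) ⊆ ndirty G S t)
    (hC : ∀ t : ℕ, 1 ≤ t → t ≤ Tf → (nclearSubgraph G S t).Connected)
    (hclear : ndirty G S Tf = ∅)
    (K : ℕ) (hK : ∀ t ≤ Tf, sn S t ≤ K) :
    ∃ (S' : ℕ → GMove V) (Tf' : ℕ), Legal G S' ∧ edirty G S' Tf' = ∅ ∧
      ∀ t ≤ Tf', sn S' t ≤ K + 1 :=
  stmt10_general G S hL hI Tf hclear K hK
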